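/- arXiv:2006.08567 — 5 statements merged into one kernel-verified Lean document; each statement's English description precedes it below -/
import Mathlib

section
/- More generally, for all a,b ∈ ℝ and σ,τ > 0, the squared Hellinger distance between normal distributions satisfies H²(N(a,σ²), N(b,τ²)) = 1 - √(2στ/(σ²+τ²)) · exp(-(a-b)²/(4(σ²+τ²))). -/
/-!
Both Gaussians have everywhere positive Lebesgue densities `p` and `q`, so the Radon–Nikodym
derivative is `p / q` and the Hellinger affinity `∫ √(dμ/dν) dν` equals `∫ √(p q) dt`. The
exponent of `√(p q)` is a sum of two quadratics in `t`; completing the square turns it into the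
constant `-(a - b)² / (4(σ² + τ²))` plus a centred quadratic, whose Gaussian integral is
`√(π / k)` with `k = (σ² + τ²) / (4σ²τ²)`.
-/

open MeasureTheory ProbabilityTheory
open scoped NNReal

lemma integral_sqrt_rnDeriv_withDensity_ofReal {α : Type*} [MeasurableSpace α] {μ : Measure α}
    [SigmaFinite μ] {f g : α → ℝ} (hf : Measurable f) (hg : Measurable g) (hf₀ : ∀ x, 0 ≤ f x)
    (hg₀ : ∀ x, 0 < g x) :
    ∫ x, √((μ.withDensity fun x ↦ ENNReal.ofReal (f x)).rnDeriv
        (μ.withDensity fun x ↦ ENNReal.ofReal (g x)) x).toReal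
        ∂(μ.withDensity fun x ↦ ENNReal.ofReal (g x)) = ∫ x, √(f x * g x) ∂μ := by
  have hratio : Measurable fun x ↦ ENNReal.ofReal (f x / g x) := (hf.div hg).ennreal_ofReal
  have hdensity : (μ.withDensity fun x ↦ ENNReal.ofReal (f x)) =
      (μ.withDensity fun x ↦ ENNReal.ofReal (g x)).withDensity
        fun x ↦ ENNReal.ofReal (f x / g x) := by
    rw [← withDensity_mul _ hg.ennreal_ofReal hratio]
    congr 1 with x
    rw [Pi.mul_apply, ← ENNReal.ofReal_mul (hg₀ x).le, mul_div_cancel₀ _ (hg₀ x).ne']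
  have hrnDeriv : (μ.withDensity fun x ↦ ENNReal.ofReal (f x)).rnDeriv
        (μ.withDensity fun x ↦ ENNReal.ofReal (g x)) =ᵐ[μ.withDensity fun x ↦ ENNReal.ofReal (g x)]
        fun x ↦ ENNReal.ofReal (f x / g x) := by
    rw [hdensity]
    exact Measure.rnDeriv_withDensity _ hratio
  rw [integral_congr_ae (hrnDeriv.mono fun x hx ↦ by rw [hx]),
    integral_withDensity_eq_integral_toReal_smul hg.ennreal_ofReal
      (ae_of_all _ fun _ ↦ ENNReal.ofReal_lt_top)]
  congr 1 with x
  have hgx := hg₀ x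
  rw [ENNReal.toReal_ofReal hgx.le, ENNReal.toReal_ofReal (div_nonneg (hf₀ x) hgx.le), smul_eq_mul,
    show f x * g x = g x ^ 2 * (f x / g x) by field_simp,
    Real.sqrt_mul (sq_nonneg _), Real.sqrt_sq hgx.le]

lemma integral_sqrt_rnDeriv_gaussianReal (a b : ℝ) {v w : ℝ≥0} (hv : v ≠ 0) (hw : w ≠ 0) :
    ∫ t, √(((gaussianReal a v).rnDeriv (gaussianReal b w) t).toReal) ∂(gaussianReal b w) =
      ∫ t, √(gaussianPDFReal a v t * gaussianPDFReal b w t) := by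
  rw [gaussianReal_of_var_ne_zero _ hv, gaussianReal_of_var_ne_zero _ hw]
  exact integral_sqrt_rnDeriv_withDensity_ofReal (measurable_gaussianPDFReal a v)
    (measurable_gaussianPDFReal b w) (gaussianPDFReal_nonneg a v) (gaussianPDFReal_pos b w · hw)

lemma sqrt_gaussianPDFReal (a : ℝ) (v : ℝ≥0) (t : ℝ) :
    √(gaussianPDFReal a v t) = (√√(2 * Real.pi * v))⁻¹ * Real.exp (-(t - a) ^ 2 / (4 * v)) := by
  rw [gaussianPDFReal, Real.sqrt_mul (by positivity), Real.sqrt_inv, ← Real.exp_half]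
  congr 2
  ring

lemma neg_sq_div_add_neg_sq_div (a b t : ℝ) {v w : ℝ} (hv : 0 < v) (hw : 0 < w) :
    -(t - a) ^ 2 / (4 * v) + -(t - b) ^ 2 / (4 * w) =
      -(a - b) ^ 2 / (4 * (v + w)) +
        -((v + w) / (4 * v * w)) * (t - (a * w + b * v) / (v + w)) ^ 2 := by
  field_simp
  ring

lemma integral_exp_neg_mul_sub_sq (k m : ℝ) :
    ∫ t, Real.exp (-k * (t - m) ^ 2) = √(Real.pi / k) :=
  (integral_sub_right_eq_self (fun u ↦ Real.exp (-k * u ^ 2)) m).trans (integral_gaussian k)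

/-- For all `a, b ∈ ℝ` and `σ, τ > 0`, the squared Hellinger distance
between normal distributions satisfies
`H²(N(a,σ²), N(b,τ²)) = 1 - √(2στ/(σ²+τ²)) · exp(-(a-b)²/(4(σ²+τ²)))`. -/
theorem sqHellinger_gaussianReal (a b σ τ : ℝ) (hσ : 0 < σ) (hτ : 0 < τ) :
    1 - ∫ t, Real.sqrt
        (((gaussianReal a ⟨σ ^ 2, sq_nonneg σ⟩).rnDeriv
            (gaussianReal b ⟨τ ^ 2, sq_nonneg τ⟩) t).toReal)
        ∂(gaussianReal b ⟨τ ^ 2, sq_nonneg τ⟩) =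
      1 - Real.sqrt (2 * σ * τ / (σ ^ 2 + τ ^ 2)) *
          Real.exp (-(a - b) ^ 2 / (4 * (σ ^ 2 + τ ^ 2))) := by
  set v : ℝ≥0 := ⟨σ ^ 2, sq_nonneg σ⟩
  set w : ℝ≥0 := ⟨τ ^ 2, sq_nonneg τ⟩
  have hv : (v : ℝ) = σ ^ 2 := rfl
  have hw : (w : ℝ) = τ ^ 2 := rfl
  have hv₀ : 0 < (v : ℝ) := hv ▸ by positivity
  have hw₀ : 0 < (w : ℝ) := hw ▸ by positivity
  simp_rw [integral_sqrt_rnDeriv_gaussianReal a b (NNReal.coe_pos.1 hv₀).ne'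
      (NNReal.coe_pos.1 hw₀).ne', Real.sqrt_mul (gaussianPDFReal_nonneg _ _ _),
    sqrt_gaussianPDFReal, mul_mul_mul_comm _ (Real.exp _), ← Real.exp_add,
    neg_sq_div_add_neg_sq_div a b _ hv₀ hw₀, Real.exp_add, ← mul_assoc]
  rw [integral_const_mul, integral_exp_neg_mul_sub_sq, hv, hw]
  have hnormalizer : √√(2 * Real.pi * σ ^ 2) * √√(2 * Real.pi * τ ^ 2) =
      √(2 * Real.pi * σ * τ) := by
    rw [← Real.sqrt_mul (by positivity), ← Real.sqrt_mul (by positivity),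
      show 2 * Real.pi * σ ^ 2 * (2 * Real.pi * τ ^ 2) = (2 * Real.pi * σ * τ) ^ 2 by ring,
      Real.sqrt_sq (by positivity)]
  rw [mul_right_comm _ (Real.exp _), ← mul_inv, hnormalizer, ← Real.sqrt_inv,
    ← Real.sqrt_mul (by positivity)]
  congr 3
  field_simp
  ring
end

section
/- If (aₙ) and (σₙ) are sequences of reals with ∑ σₙ² = +∞, then for each a ∈ ℝ and each n, the total variation distance ‖N(aₙ,σₙ²)*⋯*N(a_{n+m},σ_{n+m}²)*δ_a − N(aₙ,σₙ²)*⋯*N(a_{n+m},σ_{n+m}²)‖ tends to 0 as m → ∞; i.e. the sequence of Gaussian measures (N(aₙ,σₙ²)) is asymptotically translation invariant (ATI). -/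
/-
The partial convolution `N(aₙ, σₙ²) ∗ ⋯ ∗ N(a_{n+m}, σ_{n+m}²)` is the Gaussian `N(A, V)` with
`V = σₙ² + ⋯ + σ_{n+m}²`, which tends to infinity, and convolving it with `δ_c` shifts its mean
by `c`. Two Gaussians of variance `V` whose means differ by `c ≥ 0` have densities ordered on
either side of the midpoint `t` of the means, so on any set their masses differ by at most the
mass `N(A, V)[t - c, t)` of an interval of length `c`, that is by at most `c / √(2πV) → 0`.
-/

open MeasureTheory ProbabilityTheory Filter

/-- The convolution `ξ n ∗ ξ (n+1) ∗ ⋯ ∗ ξ (n+m)` of a sequence of measures on `ℝ`. -/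
noncomputable def convFrom (ξ : ℕ → Measure ℝ) (n : ℕ) : ℕ → Measure ℝ
  | 0 => ξ n
  | m + 1 => Measure.conv (convFrom ξ n m) (ξ (n + m + 1))

open Set Real Topology
open scoped NNReal

namespace MeasureTheory

variable {α : Type*} [MeasurableSpace α] {P Q : Measure α} [IsFiniteMeasure P]
  [IsFiniteMeasure Q] {A s : Set α}

lemma measureReal_sub_le_of_restrict_le (hA : MeasurableSet A) (hs : MeasurableSet s)
    (hle : Q.restrict A ≤ P.restrict A) (hge : P.restrict Aᶜ ≤ Q.restrict Aᶜ) :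
    P.real s - Q.real s ≤ P.real A - Q.real A := by
  have hout : P.real (s \ A) ≤ Q.real (s \ A) := by
    have := hge (s \ A)
    rw [Measure.restrict_eq_self _ (sdiff_subset_compl _ _),
      Measure.restrict_eq_self _ (sdiff_subset_compl _ _)] at this
    exact ENNReal.toReal_mono (measure_ne_top _ _) this
  have hin : Q.real (A \ s) ≤ P.real (A \ s) := by
    have := hle (A \ s)
    rw [Measure.restrict_eq_self _ sdiff_subset, Measure.restrict_eq_self _ sdiff_subset] at this
    exact ENNReal.toReal_mono (measure_ne_top _ _) this
  rw [← measureReal_inter_add_sdiff (s := s) hA (μ := P),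
    ← measureReal_inter_add_sdiff (s := s) hA (μ := Q),
    ← measureReal_inter_add_sdiff (s := A) hs (μ := P),
    ← measureReal_inter_add_sdiff (s := A) hs (μ := Q), inter_comm A s]
  linarith

end MeasureTheory

namespace ProbabilityTheory

variable {μ : ℝ} {v : ℝ≥0}

lemma gaussianPDFReal_le_gaussianPDFReal_iff {μ' : ℝ} (hv : v ≠ 0) (x : ℝ) :
    gaussianPDFReal μ v x ≤ gaussianPDFReal μ' v x ↔ (x - μ') ^ 2 ≤ (x - μ) ^ 2 := by
  have hv' : (0 : ℝ) < v := by positivity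
  rw [gaussianPDFReal, gaussianPDFReal, mul_le_mul_iff_right₀ (by positivity), exp_le_exp,
    div_le_div_iff_of_pos_right (by positivity), neg_le_neg_iff]

lemma gaussianPDFReal_le_inv_sqrt (x : ℝ) : gaussianPDFReal μ v x ≤ (√(2 * π * v))⁻¹ :=
  mul_le_of_le_one_right (by positivity) <| exp_le_one_iff.2 <|
    div_nonpos_of_nonpos_of_nonneg (neg_nonpos.2 (sq_nonneg _)) (by positivity)

lemma gaussianReal_restrict_le_of_pdf_le {μ' : ℝ} (hv : v ≠ 0) {A : Set ℝ}
    (hA : MeasurableSet A) (h : ∀ x ∈ A, gaussianPDFReal μ v x ≤ gaussianPDFReal μ' v x) :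
    (gaussianReal μ v).restrict A ≤ (gaussianReal μ' v).restrict A := by
  rw [gaussianReal_of_var_ne_zero _ hv, gaussianReal_of_var_ne_zero _ hv,
    restrict_withDensity hA, restrict_withDensity hA]
  exact withDensity_mono ((ae_restrict_iff' hA).2
    (ae_of_all _ fun x hx => ENNReal.ofReal_le_ofReal (h x hx)))

lemma gaussianReal_real_Ico_le (hv : v ≠ 0) {b e : ℝ} (hbe : b ≤ e) :
    (gaussianReal μ v).real (Ico b e) ≤ (e - b) / √(2 * π * v) := by
  rw [measureReal_def, gaussianReal_apply_eq_integral _ hv, ENNReal.toReal_ofReal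
    (setIntegral_nonneg measurableSet_Ico fun x _ => gaussianPDFReal_nonneg _ _ _)]
  calc ∫ x in Ico b e, gaussianPDFReal μ v x ≤ ∫ x in Ico b e, (√(2 * π * v))⁻¹ :=
        setIntegral_mono_on (integrable_gaussianPDFReal μ v).integrableOn
          (integrableOn_const (by simp)) measurableSet_Ico fun x _ => gaussianPDFReal_le_inv_sqrt x
    _ = (e - b) / √(2 * π * v) := by simp [hbe, div_eq_mul_inv]

lemma gaussianReal_add_real_sub_le (hv : v ≠ 0) {c : ℝ} (hc : 0 ≤ c) {s : Set ℝ}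
    (hs : MeasurableSet s) :
    (gaussianReal (μ + c) v).real s - (gaussianReal μ v).real s ≤ c / √(2 * π * v) := by
  set t := μ + c / 2 with ht
  have hle : (gaussianReal μ v).restrict (Ici t) ≤ (gaussianReal (μ + c) v).restrict (Ici t) :=
    gaussianReal_restrict_le_of_pdf_le hv measurableSet_Ici fun x (hx : t ≤ x) =>
      (gaussianPDFReal_le_gaussianPDFReal_iff hv x).2
        (by nlinarith [mul_nonneg hc (sub_nonneg.2 hx)])
  have hge : (gaussianReal (μ + c) v).restrict (Ici t)ᶜ ≤ (gaussianReal μ v).restrict (Ici t)ᶜ :=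
    gaussianReal_restrict_le_of_pdf_le hv measurableSet_Ici.compl fun x hx => by
      have hx : x < t := not_le.1 hx
      exact (gaussianPDFReal_le_gaussianPDFReal_iff hv x).2
        (by nlinarith [mul_nonneg hc (sub_nonneg.2 hx.le)])
  have hshift : (gaussianReal (μ + c) v).real (Ici t) = (gaussianReal μ v).real (Ici (t - c)) := by
    rw [← gaussianReal_map_add_const, map_measureReal_apply (by fun_prop) measurableSet_Ici]
    congr 1
    ext x
    simp
  calc _ ≤ (gaussianReal (μ + c) v).real (Ici t) - (gaussianReal μ v).real (Ici t) :=
        measureReal_sub_le_of_restrict_le measurableSet_Ici hs hle hge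
    _ = (gaussianReal μ v).real (Ico (t - c) t) := by
        rw [hshift, ← Ico_union_Ici_eq_Ici (by linarith : t - c ≤ t),
          measureReal_union ((Iio_disjoint_Ici le_rfl).mono_left Ico_subset_Iio_self)
            measurableSet_Ici]
        ring
    _ ≤ c / √(2 * π * v) := by simpa using gaussianReal_real_Ico_le hv (by linarith : t - c ≤ t)

lemma abs_gaussianReal_add_real_sub_le (hv : v ≠ 0) (c : ℝ) {s : Set ℝ} (hs : MeasurableSet s) :
    |(gaussianReal (μ + c) v).real s - (gaussianReal μ v).real s| ≤ |c| / √(2 * π * v) := by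
  wlog hc : 0 ≤ c generalizing μ c
  · have := this (μ := μ + c) (-c) (by linarith)
    rwa [add_neg_cancel_right, abs_sub_comm, abs_neg] at this
  have hcompl : (gaussianReal μ v).real s - (gaussianReal (μ + c) v).real s =
      (gaussianReal (μ + c) v).real sᶜ - (gaussianReal μ v).real sᶜ := by
    rw [probReal_compl_eq_one_sub hs, probReal_compl_eq_one_sub hs]
    ring
  rw [abs_of_nonneg hc, abs_sub_le_iff, hcompl]
  exact ⟨gaussianReal_add_real_sub_le hv hc hs, gaussianReal_add_real_sub_le hv hc hs.compl⟩

open Finset in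
lemma convFrom_gaussianReal (m : ℕ → ℝ) (v : ℕ → ℝ≥0) (n k : ℕ) :
    convFrom (fun i => gaussianReal (m i) (v i)) n k =
      gaussianReal (∑ i ∈ range (k + 1), m (n + i)) (∑ i ∈ range (k + 1), v (n + i)) := by
  induction k with
  | zero => simp [convFrom]
  | succ k ih => rw [convFrom, ih, gaussianReal_conv_gaussianReal, sum_range_succ _ (k + 1),
      sum_range_succ _ (k + 1), add_assoc n k 1]

end ProbabilityTheory

open Finset in
lemma tendsto_sum_range_add_atTop_of_not_summable {f : ℕ → ℝ} (hf : 0 ≤ f) (hs : ¬ Summable f)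
    (n : ℕ) : Tendsto (fun k => ∑ i ∈ range (k + 1), f (n + i)) atTop atTop := by
  have hs' : ¬ Summable fun i => f (n + i) := by
    simpa only [add_comm n, summable_nat_add_iff] using hs
  exact ((not_summable_iff_tendsto_nat_atTop_of_nonneg fun i => hf _).1 hs').comp
    (tendsto_add_atTop_nat 1)

/-- If `(aₙ)` and `(σₙ)` are sequences of reals with `∑ σₙ² = +∞`, then for
each `c ∈ ℝ` and each `n`, the total variation distance
`‖N(aₙ,σₙ²)∗⋯∗N(a_{n+m},σ_{n+m}²)∗δ_c − N(aₙ,σₙ²)∗⋯∗N(a_{n+m},σ_{n+m}²)‖` tends to `0` as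
`m → ∞`; i.e. the sequence of Gaussian measures `(N(aₙ,σₙ²))` is asymptotically translation
invariant (ATI). -/
theorem gaussian_sequence_ATI (a σ : ℕ → ℝ) (hσ : ¬ Summable fun n => (σ n) ^ 2)
    (ξ : ℕ → Measure ℝ)
    (hξ : ∀ n, ξ n = gaussianReal (a n) ⟨(σ n) ^ 2, sq_nonneg (σ n)⟩) :
    ∀ (c : ℝ) (n : ℕ),
      Tendsto (fun m => ⨆ C : {s : Set ℝ // MeasurableSet s},
          |((Measure.conv (convFrom ξ n m) (Measure.dirac c)) C.1).toReal -
            ((convFrom ξ n m) C.1).toReal|)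
        atTop (nhds 0) := by
  intro c n
  set v : ℕ → ℝ≥0 := fun i => ⟨σ i ^ 2, sq_nonneg (σ i)⟩
  obtain rfl : ξ = fun i => gaussianReal (a i) (v i) := funext hξ
  set V : ℕ → ℝ≥0 := fun m => ∑ i ∈ Finset.range (m + 1), v (n + i)
  have hV : Tendsto (fun m => (V m : ℝ)) atTop atTop :=
    (tendsto_sum_range_add_atTop_of_not_summable (fun i => sq_nonneg (σ i)) hσ n).congr
      fun m => (NNReal.coe_sum ..).symm
  have hbound : Tendsto (fun m => |c| / √(2 * π * V m)) atTop (𝓝 0) :=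
    tendsto_const_nhds.div_atTop (tendsto_sqrt_atTop.comp (hV.const_mul_atTop (by positivity)))
  refine squeeze_zero' (.of_forall fun m => Real.iSup_nonneg fun C => abs_nonneg _) ?_ hbound
  filter_upwards [hV.eventually_gt_atTop 0] with m hm
  refine Real.iSup_le (fun C => ?_) (by positivity)
  rw [convFrom_gaussianReal, ← gaussianReal_zero_var, gaussianReal_conv_gaussianReal, add_zero]
  exact abs_gaussianReal_add_real_sub_le (NNReal.coe_pos.1 hm).ne' c C.2
end

section
/- Let H be a real Hilbert space and V an orthogonal operator on H. For f ∈ H define f⁽ⁿ⁾ by the affine iteration (f,V)ⁿ = (f⁽ⁿ⁾, Vⁿ), i.e. f⁽ⁿ⁾ = f + Vf + ⋯ + V^{n-1}f for n ≥ 1. Then f is a V-coboundary (f = a − Va for some a ∈ H) if and only if the sequence (f⁽ⁿ⁾)_{n∈ℤ} is bounded in H. -/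
/-!
If `f = a - V a` then `F n = a - Vⁿ a`, which is bounded by `2 ‖a‖`. Conversely, the bounded orbit
`{F n}` is permuted by the affine isometry `T x = f + V x`, since `T (F n) = F (n + 1)`. In a
Hilbert space the function `x ↦ supₙ ‖x - F n‖` has a unique minimizer, the Chebyshev centre of the
orbit, by the parallelogram law; `T` preserves this function, so it fixes the centre `c`, and
`f + V c = c` says that `f = c - V c`.
-/

open Topology Metric Set Function

noncomputable def supDist {ι α : Type*} [PseudoMetricSpace α] (p : ι → α) (x : α) : ℝ :=
  ⨆ i, dist x (p i)

section PseudoMetricSpace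

variable {ι α : Type*} [PseudoMetricSpace α] {p : ι → α}

theorem bddAbove_range_dist (hp : Bornology.IsBounded (range p)) (x : α) :
    BddAbove (range fun i => dist x (p i)) := by
  obtain ⟨r, hr⟩ := (isBounded_iff_subset_closedBall x).1 hp
  refine ⟨r, ?_⟩
  rintro _ ⟨i, rfl⟩
  exact (dist_comm x (p i)).trans_le (hr ⟨i, rfl⟩)

theorem dist_le_supDist (hp : Bornology.IsBounded (range p)) (x : α) (i : ι) :
    dist x (p i) ≤ supDist p x :=
  le_ciSup (bddAbove_range_dist hp x) i

theorem supDist_le [Nonempty ι] {x : α} {b : ℝ} (h : ∀ i, dist x (p i) ≤ b) :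
    supDist p x ≤ b :=
  ciSup_le h

theorem supDist_nonneg (x : α) : 0 ≤ supDist p x :=
  Real.iSup_nonneg fun _ => dist_nonneg

theorem lipschitzWith_supDist [Nonempty ι] (hp : Bornology.IsBounded (range p)) :
    LipschitzWith 1 (supDist p) :=
  LipschitzWith.of_le_add fun x y => supDist_le fun i =>
    calc dist x (p i) ≤ dist y (p i) + dist x y := (dist_triangle x y (p i)).trans_eq (add_comm _ _)
      _ ≤ supDist p y + dist x y := by gcongr; exact dist_le_supDist hp y i

theorem supDist_comp_equiv {κ : Type*} (σ : κ ≃ ι) : supDist (p ∘ σ) = supDist p :=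
  funext fun x => σ.iSup_comp (g := fun i => dist x (p i))

theorem supDist_comp_isometry {β : Type*} [PseudoMetricSpace β] {T : α → β} (hT : Isometry T)
    (x : α) : supDist (T ∘ p) (T x) = supDist p x := by
  simp only [supDist, comp_apply, hT.dist_eq]

theorem supDist_apply_eq_of_comp_eq {T : α → α} (hT : Isometry T) (σ : ι ≃ ι)
    (hTp : T ∘ p = p ∘ σ) (x : α) : supDist p (T x) = supDist p x := by
  have := supDist_comp_isometry hT (p := p) x
  rwa [hTp, supDist_comp_equiv] at this

theorem supDist_sq_le [Nonempty ι] {x : α} {b : ℝ} (h : ∀ i, dist x (p i) ^ 2 ≤ b) :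
    supDist p x ^ 2 ≤ b := by
  have hb : 0 ≤ b := (sq_nonneg _).trans (h (Classical.arbitrary ι))
  have : supDist p x ≤ √b := supDist_le fun i => Real.le_sqrt_of_sq_le (h i)
  calc supDist p x ^ 2 ≤ √b ^ 2 := by gcongr; exact supDist_nonneg x
    _ = b := Real.sq_sqrt hb

end PseudoMetricSpace

section Euclidean

variable {ι E : Type*} [NormedAddCommGroup E] [InnerProductSpace ℝ E] {p : ι → E}

theorem sq_dist_le_supDist_midpoint [Nonempty ι] (hp : Bornology.IsBounded (range p)) (x y : E) :
    dist x y ^ 2 ≤ 2 * supDist p x ^ 2 + 2 * supDist p y ^ 2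
      - 4 * supDist p (midpoint ℝ x y) ^ 2 := by
  suffices supDist p (midpoint ℝ x y) ^ 2 ≤
      (supDist p x ^ 2 + supDist p y ^ 2) / 2 - dist x y ^ 2 / 4 by linarith
  refine supDist_sq_le fun i => ?_
  have := EuclideanGeometry.dist_sq_add_dist_sq_eq_two_mul_dist_midpoint_sq_add_half_dist_sq
    (p i) x y
  have hx := dist_le_supDist hp x i
  have hy := dist_le_supDist hp y i
  rw [dist_comm (p i), dist_comm (p i), dist_comm (p i)] at this
  nlinarith [dist_nonneg (x := x) (y := p i), dist_nonneg (x := y) (y := p i)]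

theorem sq_dist_le_of_supDist_sq_le [Nonempty ι] (hp : Bornology.IsBounded (range p)) {r ε : ℝ}
    (hr₀ : 0 ≤ r) (hr : ∀ z, r ≤ supDist p z) {x y : E} (hx : supDist p x ^ 2 ≤ r ^ 2 + ε)
    (hy : supDist p y ^ 2 ≤ r ^ 2 + ε) : dist x y ^ 2 ≤ 4 * ε := by
  have hmid : r ^ 2 ≤ supDist p (midpoint ℝ x y) ^ 2 := by gcongr; exact hr _
  linarith [sq_dist_le_supDist_midpoint hp x y]

theorem exists_forall_supDist_le [CompleteSpace E] [Nonempty ι]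
    (hp : Bornology.IsBounded (range p)) : ∃ c, ∀ x, supDist p c ≤ supDist p x := by
  set r := ⨅ x, supDist p x
  have hr : ∀ x, r ≤ supDist p x := ciInf_le ⟨0, by rintro _ ⟨x, rfl⟩; exact supDist_nonneg x⟩
  have hr₀ : 0 ≤ r := le_ciInf supDist_nonneg
  -- By the parallelogram law these sublevel sets shrink to a point.
  set s : ℕ → Set E := fun n => {x | supDist p x ^ 2 ≤ r ^ 2 + 1 / (n + 1)}
  have hs_diam : ∀ n, ∀ x ∈ s n, ∀ y ∈ s n, dist x y ≤ √(4 * (1 / (n + 1))) :=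
    fun n x hx y hy => Real.le_sqrt_of_sq_le (sq_dist_le_of_supDist_sq_le hp hr₀ hr hx hy)
  have hs_nonempty : ∀ n, (s n).Nonempty := by
    intro n
    have : r < √(r ^ 2 + 1 / (n + 1)) := (Real.lt_sqrt hr₀).2 (by simp; positivity)
    obtain ⟨x, hx⟩ := exists_lt_of_ciInf_lt this
    exact ⟨x, ((Real.lt_sqrt (supDist_nonneg x)).1 hx).le⟩
  obtain ⟨c, hc⟩ : (⋂ n, s n).Nonempty := by
    refine nonempty_iInter_of_nonempty_biInter (fun n => ?_) (fun n => ?_) (fun N => ?_) ?_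
    · exact isClosed_le ((lipschitzWith_supDist hp).continuous.pow 2) continuous_const
    · exact isBounded_iff.2 ⟨_, hs_diam n⟩
    · refine (hs_nonempty N).mono fun x hx => mem_iInter₂.2 fun n hn => ?_
      exact le_trans (α := ℝ) hx (add_le_add_right (Nat.one_div_le_one_div hn) _)
    · refine squeeze_zero (fun n => diam_nonneg) (fun n => diam_le_of_forall_dist_le
        (Real.sqrt_nonneg _) (hs_diam n)) ?_
      simpa using ((tendsto_one_div_add_atTop_nhds_zero_nat.const_mul 4).sqrt)
  refine ⟨c, fun x => le_trans ?_ (hr x)⟩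
  have : supDist p c ^ 2 ≤ r ^ 2 := by
    refine ge_of_tendsto' (x := Filter.atTop) ?_
      fun n => (mem_iInter.1 hc n : supDist p c ^ 2 ≤ _)
    simpa using tendsto_one_div_add_atTop_nhds_zero_nat.const_add (r ^ 2)
  exact le_of_sq_le_sq this hr₀

theorem eq_of_supDist_le [Nonempty ι] (hp : Bornology.IsBounded (range p)) {c y : E}
    (hc : ∀ x, supDist p c ≤ supDist p x) (hy : supDist p y ≤ supDist p c) : y = c := by
  have hy' : supDist p y ^ 2 ≤ supDist p c ^ 2 + 0 := by
    rw [add_zero]; gcongr; exact supDist_nonneg y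
  simpa using sq_dist_le_of_supDist_sq_le hp (supDist_nonneg c) hc hy' (by rw [add_zero])

theorem exists_isFixedPt_of_isometry_of_comp_eq [CompleteSpace E] [Nonempty ι]
    (hp : Bornology.IsBounded (range p)) {T : E → E} (hT : Isometry T) (σ : ι ≃ ι)
    (hTp : T ∘ p = p ∘ σ) : ∃ c, IsFixedPt T c := by
  obtain ⟨c, hc⟩ := exists_forall_supDist_le hp
  exact ⟨c, eq_of_supDist_le hp hc (supDist_apply_eq_of_comp_eq hT σ hTp c).le⟩

end Euclidean

theorem Int.eq_of_apply_add_one_eq {α : Type*} {T : α → α} (hT : Injective T) {u v : ℤ → α}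
    (hu : ∀ n, u (n + 1) = T (u n)) (hv : ∀ n, v (n + 1) = T (v n)) (h₀ : u 0 = v 0) :
    u = v := by
  funext n
  induction n using Int.induction_on with
  | zero => exact h₀
  | succ k ih => rw [hu, hv, ih]
  | pred k ih => exact hT (by rw [← hu, ← hv, sub_add_cancel, ih])

theorem LinearIsometryEquiv.sub_zpow_add_one_apply {R E : Type*} [Ring R]
    [SeminormedAddCommGroup E] [Module R E] (V : E ≃ₗᵢ[R] E) (a : E) (n : ℤ) :
    a - (V ^ (n + 1)) a = a - V a + V (a - (V ^ n) a) := by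
  rw [add_comm n 1, zpow_one_add, LinearIsometryEquiv.coe_mul, comp_apply, map_sub]
  abel

/-- Let `H` be a real Hilbert space and `V` an orthogonal operator on `H`.
For `f ∈ H` define `f⁽ⁿ⁾` (`n ∈ ℤ`) by the affine iteration `(f,V)ⁿ = (f⁽ⁿ⁾, Vⁿ)`, i.e.
`F 0 = 0` and `F (n+1) = f + V (F n)` for all `n ∈ ℤ`. Then `f` is a `V`-coboundary
(`f = a − Va` for some `a ∈ H`) if and only if the sequence `(f⁽ⁿ⁾)_{n∈ℤ}` is bounded. -/
theorem coboundary_iff_bounded_cocycle {H : Type*} [NormedAddCommGroup H]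
    [InnerProductSpace ℝ H] [CompleteSpace H]
    (V : H ≃ₗᵢ[ℝ] H) (f : H) (F : ℤ → H)
    (hF0 : F 0 = 0) (hFrec : ∀ n : ℤ, F (n + 1) = f + V (F n)) :
    (∃ a : H, f = a - V a) ↔ ∃ C : ℝ, ∀ n : ℤ, ‖F n‖ ≤ C := by
  constructor
  · rintro ⟨a, rfl⟩
    have hF : F = fun n => a - (V ^ n) a :=
      Int.eq_of_apply_add_one_eq (T := fun x => a - V a + V x)
        ((add_right_injective _).comp V.injective) hFrec (V.sub_zpow_add_one_apply a)
        (by simp [hF0])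
    refine ⟨2 * ‖a‖, fun n => ?_⟩
    calc ‖F n‖ ≤ ‖a‖ + ‖(V ^ n) a‖ := hF ▸ norm_sub_le _ _
      _ = 2 * ‖a‖ := by rw [LinearIsometryEquiv.norm_map]; ring
  · rintro ⟨C, hC⟩
    have hbdd : Bornology.IsBounded (range F) :=
      isBounded_iff_forall_norm_le.2 ⟨C, forall_mem_range.2 hC⟩
    have hT : Isometry fun x => f + V x := (isometry_add_left f).comp V.isometry
    obtain ⟨c, hc⟩ := exists_isFixedPt_of_isometry_of_comp_eq hbdd hT (Equiv.addRight 1)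
      (funext fun n => (hFrec n).symm)
    exact ⟨c, eq_sub_of_add_eq hc⟩
end

section
/- The family of exponential vectors {exp_h : h ∈ K} in the Fock space 𝓕(K) is linearly independent: any finite set of exponential vectors over distinct vectors h₁,…,hₙ ∈ K is linearly independent. -/
open scoped RealInnerProductSpace

theorem linearIndependent_pow_seq (F : Type*) [CommRing F] [IsDomain F] :
    LinearIndependent F fun (a : F) (n : ℕ) => a ^ n :=
  (linearIndependent_monoidHom (Multiplicative ℕ) F).comp (powersHom F) (powersHom F).injective

/-- `E` is not a finite union of the proper subspaces `{k | ⟪a - b, k⟫ = 0}`, `a ≠ b` in `s`. -/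
theorem exists_inner_injOn {𝕜 E : Type*} [RCLike 𝕜] [NormedAddCommGroup E]
    [InnerProductSpace 𝕜 E] {s : Set E} (hs : s.Finite) :
    ∃ k : E, Set.InjOn (fun h => inner 𝕜 h k) s := by
  have : Finite s.offDiag := hs.offDiag.to_subtype
  let p : s.offDiag → Subspace 𝕜 E := fun q => LinearMap.ker (innerₛₗ 𝕜 (q.1.1 - q.1.2))
  obtain ⟨k, hk⟩ : ∃ k, k ∉ ⋃ q, (p q : Set E) := by
    by_contra! hcover
    obtain ⟨⟨⟨a, b⟩, hab⟩, htop⟩ :=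
      Subspace.exists_eq_top_of_iUnion_eq_univ (Set.eq_univ_of_forall hcover)
    have hmem : a - b ∈ p ⟨(a, b), hab⟩ := htop ▸ Submodule.mem_top
    simp only [p, LinearMap.mem_ker, innerₛₗ_apply_apply, inner_self_eq_zero, sub_eq_zero] at hmem
    exact hab.2.2 hmem
  refine ⟨k, fun a ha b hb hab => by_contra fun hne =>
    hk (Set.mem_iUnion.2 ⟨⟨(a, b), ha, hb, hne⟩, ?_⟩)⟩
  simp only [p, SetLike.mem_coe, LinearMap.mem_ker, innerₛₗ_apply_apply, inner_sub_left]
  exact sub_eq_zero.2 hab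

/-- The family of exponential vectors `{exp_h : h ∈ K}` in the Fock space
`𝓕(K)` (modelled as in Statement 14 by a family of chaoses `Fn n` with symmetric powers
`tpow` satisfying `⟨h^{⊗n}, k^{⊗n}⟩ = ⟨h,k⟩ⁿ`, and `exp_h = ⨁_n h^{⊗n}/√(n!)`) is linearly
independent: any finite set of exponential vectors over distinct vectors of `K` is linearly
independent. -/
theorem fock_exponential_linearIndependent {K : Type*} [NormedAddCommGroup K]
    [InnerProductSpace ℝ K]
    {Fn : ℕ → Type*} [∀ n, NormedAddCommGroup (Fn n)] [∀ n, InnerProductSpace ℝ (Fn n)]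
    (tpow : ∀ n, K → Fn n)
    (htpow : ∀ (n : ℕ) (h k : K), ⟪tpow n h, tpow n k⟫ = ⟪h, k⟫ ^ n)
    (expv : K → ∀ n, Fn n)
    (hexpv : ∀ (h : K) (n : ℕ), expv h n = ((Real.sqrt (Nat.factorial n))⁻¹ : ℝ) • tpow n h) :
    LinearIndependent ℝ expv := by
  refine linearIndependent_iff_finset_linearIndependent.2 fun s => ?_
  obtain ⟨k, hk⟩ := exists_inner_injOn (𝕜 := ℝ) s.finite_toSet
  -- Pairing the `n`-th chaos with `k^{⊗n}` turns `exp_h` into the moment sequence of `⟪h, k⟫`.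
  let L : (∀ n, Fn n) →ₗ[ℝ] ℕ → ℝ := LinearMap.pi fun n =>
    (Real.sqrt (Nat.factorial n) • innerₛₗ ℝ (tpow n k)) ∘ₗ LinearMap.proj n
  have hL : ⇑L ∘ expv = (fun a n => a ^ n) ∘ fun h => ⟪h, k⟫ := by
    ext h n
    have hfac : Real.sqrt (Nat.factorial n) ≠ 0 := by positivity
    simp only [L, Function.comp_apply, LinearMap.pi_apply, LinearMap.comp_apply,
      LinearMap.proj_apply, LinearMap.smul_apply, innerₛₗ_apply_apply, hexpv,
      real_inner_smul_right, htpow, real_inner_comm h, smul_eq_mul, mul_inv_cancel_left₀ hfac]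
  refine LinearIndependent.of_comp L ?_
  rw [← Function.comp_assoc, hL]
  exact (linearIndependent_pow_seq ℝ).comp _ hk.injective
end

section
/- Let 𝓗₀ be a real Hilbert space, V an orthogonal operator on 𝓗₀, f ∈ 𝓗₀, and f⁽ⁿ⁾ = f + Vf + ⋯ + V^{n-1}f. Define the Poincaré exponent δ_A = inf{α > 0 : ∑_{n≥1} e^{-α‖f⁽ⁿ⁾‖₀²} < ∞} ∈ [0,∞]. If for some t > 0 the series ∑_{n≥0} e^{t·ℓₙ(x) − t²‖f⁽ⁿ⁾‖₀²/2} diverges for a.e. x with respect to a Gaussian measure under which each ℓₙ is a centered Gaussian random variable of variance ‖f⁽ⁿ⁾‖₀², then ∑_{n≥0} e^{-t²‖f⁽ⁿ⁾‖₀²/8} = ∞, and hence δ_A ≥ t²/8. -/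
/-!
Put `Yₙ = exp ((t/2) ℓₙ - t² ‖f⁽ⁿ⁾‖² / 4)`. Then `Yₙ²` is the `n`-th term of the series assumed
to diverge, while the Gaussian moment generating function gives `E Yₙ = exp (-t² ‖f⁽ⁿ⁾‖² / 8)`.
If these expectations were summable, `∑ Yₙ` would converge almost surely; then `Yₙ → 0`, so
`∑ Yₙ²` would converge almost surely too, a contradiction. The bound on `δ_A` follows because
`exp (-α ‖f⁽ⁿ⁾‖²)` decreases in `α`.
-/

open MeasureTheory ProbabilityTheory Real
open scoped NNReal

theorem ae_summable_norm_of_summable_integral_norm {ι X E : Type*} [Countable ι]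
    [MeasurableSpace X] {μ : Measure X} [NormedAddCommGroup E] {f : ι → X → E}
    (hf : ∀ n, Integrable (f n) μ) (hs : Summable fun n => ∫ x, ‖f n x‖ ∂μ) :
    ∀ᵐ x ∂μ, Summable fun n => ‖f n x‖ := by
  refine summable_norm_of_tsum_eLpNorm_ne_top le_rfl (fun n => (hf n).aestronglyMeasurable) ?_
  simp_rw [eLpNorm_one_eq_lintegral_enorm, ← ofReal_integral_norm_eq_lintegral_enorm (hf _)]
  rw [← ENNReal.ofReal_tsum_of_nonneg (fun n => integral_nonneg fun _ => norm_nonneg _) hs]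
  exact ENNReal.ofReal_ne_top

theorem Summable.mul_self {ι : Type*} {f : ι → ℝ} (hf : Summable f) :
    Summable fun i => f i * f i := by
  refine Summable.of_norm_bounded_eventually hf.abs ?_
  filter_upwards [hf.tendsto_cofinite_zero.eventually (Metric.closedBall_mem_nhds 0 one_pos)]
    with i hi
  rw [dist_zero_right] at hi
  rw [norm_mul]
  exact mul_le_of_le_one_left (norm_nonneg _) hi

section GaussianExp

variable {Ω : Type*} [MeasurableSpace Ω] {μ : Measure Ω} {X : Ω → ℝ} {m : ℝ} {v : ℝ≥0}

theorem integrable_exp_mul_sub_of_map_eq_gaussianReal [NeZero μ]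
    (hX : μ.map X = gaussianReal m v) (s c : ℝ) :
    Integrable (fun ω => exp (s * X ω - c)) μ := by
  have hexp : Integrable (fun ω => exp (s * X ω)) μ :=
    mgf_pos_iff.1 (by rw [mgf_gaussianReal hX]; exact exp_pos _)
  simpa only [exp_sub, div_eq_inv_mul] using hexp.const_mul (exp c)⁻¹

theorem integral_exp_mul_sub_of_map_eq_gaussianReal (hX : μ.map X = gaussianReal m v)
    (s c : ℝ) :
    ∫ ω, exp (s * X ω - c) ∂μ = exp (m * s + v * s ^ 2 / 2 - c) := by
  simp only [exp_sub, integral_div]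
  rw [← mgf, mgf_gaussianReal hX]

end GaussianExp

theorem not_summable_exp_neg_variance_of_ae_not_summable {Ω ι : Type*} [Countable ι]
    [MeasurableSpace Ω] {μ : Measure Ω} [NeZero μ] {ℓ : ι → Ω → ℝ} {v : ι → ℝ≥0}
    (hlaw : ∀ n, μ.map (ℓ n) = gaussianReal 0 (v n)) (t : ℝ)
    (hdiv : ∀ᵐ x ∂μ, ¬ Summable fun n => exp (t * ℓ n x - t ^ 2 * v n / 2)) :
    ¬ Summable fun n => exp (-t ^ 2 * v n / 8) := by
  intro hs
  set Y : ι → Ω → ℝ := fun n x => exp (t / 2 * ℓ n x - t ^ 2 * v n / 4)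
  have hY_int n : Integrable (Y n) μ :=
    integrable_exp_mul_sub_of_map_eq_gaussianReal (hlaw n) _ _
  have hY_mean n : ∫ x, ‖Y n x‖ ∂μ = exp (-t ^ 2 * v n / 8) := by
    simp only [Y, norm_of_nonneg (exp_pos _).le]
    rw [integral_exp_mul_sub_of_map_eq_gaussianReal (hlaw n)]
    ring_nf
  have hY_sq n x : ‖Y n x‖ * ‖Y n x‖ = exp (t * ℓ n x - t ^ 2 * v n / 2) := by
    simp only [Y, norm_of_nonneg (exp_pos _).le, ← exp_add]
    ring_nf
  have hY_sum := ae_summable_norm_of_summable_integral_norm hY_int (by simpa only [hY_mean])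
  obtain ⟨x, hx_div, hx_sum⟩ := (hdiv.and hY_sum).exists
  exact hx_div (by simpa only [hY_sq] using hx_sum.mul_self)

theorem poincare_exponent_lower_bound_general {H0 : Type*} [NormedAddCommGroup H0]
    (F : ℕ → H0)
    {Ω : Type*} [MeasurableSpace Ω] (μ : Measure Ω) [IsProbabilityMeasure μ]
    (ℓ : ℕ → Ω → ℝ)
    (hlaw : ∀ n, μ.map (ℓ n) = gaussianReal 0 ⟨‖F n‖ ^ 2, sq_nonneg ‖F n‖⟩)
    (t : ℝ)
    (hdiv : ∀ᵐ x ∂μ,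
      ¬ Summable fun n => Real.exp (t * ℓ n x - t ^ 2 * ‖F n‖ ^ 2 / 2)) :
    (¬ Summable fun n => Real.exp (-t ^ 2 * ‖F n‖ ^ 2 / 8)) ∧
      ∀ α : ℝ, 0 < α → (Summable fun n => Real.exp (-α * ‖F n‖ ^ 2)) →
        t ^ 2 / 8 ≤ α := by
  have hdiv_mean : ¬ Summable fun n => exp (-t ^ 2 * ‖F n‖ ^ 2 / 8) :=
    not_summable_exp_neg_variance_of_ae_not_summable hlaw t hdiv
  refine ⟨hdiv_mean, fun α _ hsum => ?_⟩
  by_contra! hlt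
  refine hdiv_mean (hsum.of_nonneg_of_le (fun _ => (exp_pos _).le) fun n => exp_le_exp.2 ?_)
  nlinarith [sq_nonneg ‖F n‖]

/-- Let `𝓗₀` be a real Hilbert space, `V` an orthogonal operator on `𝓗₀`,
`f ∈ 𝓗₀`, and `f⁽ⁿ⁾ = f + Vf + ⋯ + V^{n-1}f` (i.e. `F 0 = 0`, `F (n+1) = f + V (F n)`).
Define the Poincaré exponent `δ_A = inf{α > 0 : ∑_{n≥1} e^{-α‖f⁽ⁿ⁾‖₀²} < ∞}`. If for some
`t > 0` the series `∑_{n≥0} e^{t·ℓₙ(x) − t²‖f⁽ⁿ⁾‖₀²/2}` diverges for a.e. `x` with respect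
to a Gaussian measure under which each `ℓₙ` is a centered Gaussian random variable of
variance `‖f⁽ⁿ⁾‖₀²`, then `∑_{n≥0} e^{-t²‖f⁽ⁿ⁾‖₀²/8} = ∞`, and hence `δ_A ≥ t²/8`
(every `α > 0` with `∑ₙ e^{-α‖f⁽ⁿ⁾‖₀²} < ∞` satisfies `α ≥ t²/8`). -/
theorem poincare_exponent_lower_bound {H0 : Type*} [NormedAddCommGroup H0]
    [InnerProductSpace ℝ H0]
    (V : H0 ≃ₗᵢ[ℝ] H0) (f : H0) (F : ℕ → H0)
    (hF0 : F 0 = 0) (hFrec : ∀ n : ℕ, F (n + 1) = f + V (F n))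
    {Ω : Type*} [MeasurableSpace Ω] (μ : Measure Ω) [IsProbabilityMeasure μ]
    (ℓ : ℕ → Ω → ℝ) (hℓm : ∀ n, Measurable (ℓ n))
    (hlaw : ∀ n, μ.map (ℓ n) = gaussianReal 0 ⟨‖F n‖ ^ 2, sq_nonneg ‖F n‖⟩)
    (t : ℝ) (ht : 0 < t)
    (hdiv : ∀ᵐ x ∂μ,
      ¬ Summable fun n => Real.exp (t * ℓ n x - t ^ 2 * ‖F n‖ ^ 2 / 2)) :
    (¬ Summable fun n => Real.exp (-t ^ 2 * ‖F n‖ ^ 2 / 8)) ∧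
      ∀ α : ℝ, 0 < α → (Summable fun n => Real.exp (-α * ‖F n‖ ^ 2)) →
        t ^ 2 / 8 ≤ α :=
  poincare_exponent_lower_bound_general F μ ℓ hlaw t hdiv
end
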